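/- arXiv:1310.6167 — 4 statements merged into one kernel-verified Lean document; each statement's English description precedes it below -/
import Mathlib

section
/- Let u and v be convex functions on ℝⁿ, and let E be an open bounded set such that u = v on ∂E and u ≤ v in E. Then the image of E under the subdifferential of v is contained in the image of E under the subdifferential of u, i.e. ∂v(E) ⊆ ∂u(E). -/
open Set

/-- The subdifferential of `u` at `x`. -/
def subdiff {n : ℕ} (u : EuclideanSpace ℝ (Fin n) → ℝ) (x : EuclideanSpace ℝ (Fin n)) :
    Set (EuclideanSpace ℝ (Fin n)) :=
  {p | ∀ y, u x + (inner ℝ p (y - x) : ℝ) ≤ u y}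

/-- The image of a set under the subdifferential map. -/
def subimg {n : ℕ} (u : EuclideanSpace ℝ (Fin n) → ℝ) (E : Set (EuclideanSpace ℝ (Fin n))) :
    Set (EuclideanSpace ℝ (Fin n)) :=
  ⋃ x ∈ E, subdiff u x

/-!
Take `q ∈ ∂v(x₀)` with `x₀ ∈ E` and compare `u` with the supporting hyperplane of `v` at `x₀`:
the convex function `w y = u y - ⟪q, y⟫` satisfies `w x₀ ≤ v x₀ - ⟪q, x₀⟫ ≤ w` on `∂E`.
Hence a minimum of `w` over the compact set `closure E` is attained inside `E`; being a local
minimum of a convex function it is a global one, which says exactly that `q ∈ ∂u(x)` there.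
-/

theorem mem_subdiff_iff {n : ℕ} {u : EuclideanSpace ℝ (Fin n) → ℝ}
    {x p : EuclideanSpace ℝ (Fin n)} :
    p ∈ subdiff u x ↔ ∀ y, u x - inner ℝ p x ≤ u y - inner ℝ p y := by
  refine forall_congr' fun y => ?_
  rw [inner_sub_right]
  constructor <;> intro h <;> linarith

theorem exists_mem_isMinOn_closure_of_le_frontier {X α : Type*} [TopologicalSpace X]
    [LinearOrder α] [TopologicalSpace α] [ClosedIicTopology α]
    {E : Set X} (hE : IsCompact (closure E)) {f : X → α} (hf : ContinuousOn f (closure E))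
    {a : X} (ha : a ∈ E) (hfr : ∀ y ∈ frontier E, f a ≤ f y) :
    ∃ x ∈ E, IsMinOn f (closure E) x := by
  obtain ⟨x, hx, hmin⟩ := hE.exists_isMinOn ⟨a, subset_closure ha⟩ hf
  by_cases hxE : x ∈ E
  · exact ⟨x, hxE, hmin⟩
  · have hx_frontier : x ∈ frontier E := ⟨hx, fun h => hxE (interior_subset h)⟩
    exact ⟨a, ha, fun y hy => (hfr x hx_frontier).trans (hmin hy)⟩

theorem stmt0_general {n : ℕ} (u v : EuclideanSpace ℝ (Fin n) → ℝ)
    (hu : ConvexOn ℝ Set.univ u)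
    (E : Set (EuclideanSpace ℝ (Fin n))) (hE : IsOpen E) (hEb : Bornology.IsBounded E)
    (hbd : ∀ x ∈ frontier E, u x = v x) (hle : ∀ x ∈ E, u x ≤ v x) :
    subimg v E ⊆ subimg u E := by
  intro q hq
  simp only [subimg, mem_iUnion₂] at hq ⊢
  obtain ⟨x₀, hx₀, hq⟩ := hq
  set w : EuclideanSpace ℝ (Fin n) → ℝ := fun y => u y - inner ℝ q y
  have hw_convex : ConvexOn ℝ univ w := hu.sub ((innerSL ℝ q).toLinearMap.concaveOn convex_univ)
  have hw_cont : Continuous w :=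
    (continuousOn_univ.1 (hu.continuousOn isOpen_univ)).sub (continuous_const.inner continuous_id)
  have hfr : ∀ y ∈ frontier E, w x₀ ≤ w y := fun y hy => by
    have hq_y := mem_subdiff_iff.1 hq y
    simp only [w, hbd y hy]
    linarith [hle x₀ hx₀]
  obtain ⟨x, hxE, hmin⟩ := exists_mem_isMinOn_closure_of_le_frontier hEb.isCompact_closure
    hw_cont.continuousOn hx₀ hfr
  have hlocal : IsLocalMin w x :=
    hmin.isLocalMin (Filter.mem_of_superset (hE.mem_nhds hxE) subset_closure)
  exact ⟨x, hxE, mem_subdiff_iff.2 (IsMinOn.of_isLocalMin_of_convex_univ hlocal hw_convex)⟩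

theorem stmt0 {n : ℕ} (u v : EuclideanSpace ℝ (Fin n) → ℝ)
    (hu : ConvexOn ℝ Set.univ u) (hv : ConvexOn ℝ Set.univ v)
    (E : Set (EuclideanSpace ℝ (Fin n))) (hE : IsOpen E) (hEb : Bornology.IsBounded E)
    (hbd : ∀ x ∈ frontier E, u x = v x) (hle : ∀ x ∈ E, u x ≤ v x) :
    subimg v E ⊆ subimg u E :=
  stmt0_general u v hu E hE hEb hbd hle
end

section
/- Any c-cyclically monotone set lies in the c-subdifferential of a c-convex function: Let X, Y be sets, c : X × Y → ℝ, and let S ⊆ X × Y be c-cyclically monotone and nonempty. Fix (x₀,y₀) ∈ S and define u(x) := sup over N ∈ ℕ and chains {(x_i,y_i)}_{1≤i≤N} ⊆ S of [c(x₀,y₀) − c(x₁,y₀)] + [c(x₁,y₁) − c(x₂,y₁)] + ⋯ + [c(x_N,y_N) − c(x,y_N)]. Then, whenever u is real-valued, u is c-convex and S ⊆ ⋃_{x∈X} {x} × ∂_c u(x). -/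
/-!
Appending a point `q ∈ S` to a chain ending at `q.1` gives a chain ending at any `z`, and
its value grows by `c(q.1,q.2) − c(z,q.2)`; taking suprema, `q.2 ∈ ∂_c u(q.1)`. Conversely,
every chain value at `x` is bounded by the `c`-affine minorant `u(q.1) + c(q.1,q.2) − c(x,q.2)`
of `u` touching it at its last point `q`, so `u` is the supremum of such minorants, which
makes it `c`-convex.
-/

open Set

variable {X Y : Type*}

/-- `S` is `c`-cyclically monotone. -/
def CCyclicallyMonotone (c : X → Y → ℝ) (S : Set (X × Y)) : Prop :=
  ∀ (N : ℕ) (p : Fin (N + 1) → X × Y), (∀ i, p i ∈ S) →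
    ∑ i, c (p i).1 (p i).2 ≤ ∑ i, c (p i).1 (p (i + 1)).2

/-- The set of values of the Rockafellar–Rüschendorf chains at `x`, based at `(x₀, y₀)`:
`[c(x₀,y₀) − c(x₁,y₀)] + ⋯ + [c(x_{N-1},y_{N-1}) − c(x_N,y_{N-1})] + [c(x_N,y_N) − c(x,y_N)]`
over all chains `(x_i,y_i) ∈ S`. -/
def chainVals (c : X → Y → ℝ) (S : Set (X × Y)) (x₀ : X) (y₀ : Y) (x : X) : Set ℝ :=
  {r | ∃ (N : ℕ) (p : Fin (N + 1) → X × Y), (∀ i, p i ∈ S) ∧ p 0 = (x₀, y₀) ∧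
    r = (∑ i : Fin N,
          (c (p i.castSucc).1 (p i.castSucc).2 - c (p i.succ).1 (p i.castSucc).2)) +
        (c (p (Fin.last N)).1 (p (Fin.last N)).2 - c x (p (Fin.last N)).2)}

section CConvex

variable (c : X → Y → ℝ)

def cSubdiff (u : X → ℝ) (x : X) : Set Y :=
  {y | ∀ z, u x + c x y - c z y ≤ u z}

variable {c}

theorem isGLB_cTransform_of_mem_cSubdiff {u : X → ℝ} {x : X} {y : Y}
    (hy : y ∈ cSubdiff c u x) : IsGLB {t | ∃ z, t = u z + c z y} (u x + c x y) := by
  refine ⟨?_, fun b hb => hb ⟨x, rfl⟩⟩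
  rintro t ⟨z, rfl⟩
  linarith [hy z]

theorem sub_le_of_isGLB_cTransform {u : X → ℝ} {y : Y} {s : ℝ}
    (hs : IsGLB {t | ∃ z, t = u z + c z y} s) (x : X) : s - c x y ≤ u x := by
  linarith [hs.1 ⟨x, rfl⟩]

theorem isLUB_cConvex_of_isLUB_cSubdiff {u : X → ℝ} {x : X}
    (h : IsLUB {r | ∃ x', ∃ y ∈ cSubdiff c u x', r = u x' + c x' y - c x y} (u x)) :
    IsLUB {r | ∃ (y : Y) (s : ℝ), IsGLB {t | ∃ z, t = u z + c z y} s ∧ r = s - c x y}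
      (u x) := by
  refine h.of_subset_of_superset isLUB_Iic ?_ ?_
  · rintro r ⟨x', y, hy, rfl⟩
    exact ⟨y, _, isGLB_cTransform_of_mem_cSubdiff hy, rfl⟩
  · rintro r ⟨y, s, hs, rfl⟩
    exact sub_le_of_isGLB_cTransform hs x

end CConvex

section Chains

variable {c : X → Y → ℝ} {S : Set (X × Y)} {x₀ : X} {y₀ : Y}

theorem add_sub_mem_chainVals {q : X × Y} {r : ℝ} (hr : r ∈ chainVals c S x₀ y₀ q.1)
    (hq : q ∈ S) (z : X) : r + c q.1 q.2 - c z q.2 ∈ chainVals c S x₀ y₀ z := by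
  obtain ⟨N, p, hp, hp0, rfl⟩ := hr
  refine ⟨N + 1, Fin.snoc p q, ?_, ?_, ?_⟩
  · intro i
    induction i using Fin.lastCases with
    | last => simpa using hq
    | cast j => simpa using hp j
  · rw [← Fin.castSucc_zero, Fin.snoc_castSucc, hp0]
  · rw [Fin.sum_univ_castSucc]
    simp only [Fin.succ_castSucc, Fin.snoc_castSucc, Fin.succ_last, Fin.snoc_last]
    ring

theorem exists_add_sub_mem_chainVals {x : X} {r : ℝ} (hr : r ∈ chainVals c S x₀ y₀ x) :
    ∃ q ∈ S, r + c x q.2 - c q.1 q.2 ∈ chainVals c S x₀ y₀ q.1 := by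
  obtain ⟨N, p, hp, hp0, rfl⟩ := hr
  exact ⟨p (Fin.last N), hp _, N, p, hp, hp0, by ring⟩

variable {u : X → ℝ}

theorem mem_cSubdiff_of_isLUB_chainVals (hu : ∀ x, IsLUB (chainVals c S x₀ y₀ x) (u x))
    {q : X × Y} (hq : q ∈ S) : q.2 ∈ cSubdiff c u q.1 := by
  intro z
  suffices u q.1 ≤ u z - c q.1 q.2 + c z q.2 by linarith
  refine (hu q.1).2 fun r hr => ?_
  linarith [(hu z).1 (add_sub_mem_chainVals hr hq z)]

theorem isLUB_cSubdiff_of_isLUB_chainVals (hu : ∀ x, IsLUB (chainVals c S x₀ y₀ x) (u x))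
    (x : X) : IsLUB {r | ∃ x', ∃ y ∈ cSubdiff c u x', r = u x' + c x' y - c x y} (u x) := by
  refine ⟨?_, fun b hb => (hu x).2 fun r hr => ?_⟩
  · rintro r ⟨x', y, hy, rfl⟩
    exact hy x
  · obtain ⟨q, hq, hrq⟩ := exists_add_sub_mem_chainVals hr
    have hle := hb ⟨q.1, q.2, mem_cSubdiff_of_isLUB_chainVals hu hq, rfl⟩
    linarith [(hu q.1).1 hrq]

end Chains

theorem stmt8_general (c : X → Y → ℝ) (S : Set (X × Y))
    (x₀ : X) (y₀ : Y)
    (u : X → ℝ) (hu : ∀ x, IsLUB (chainVals c S x₀ y₀ x) (u x)) :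
    -- `u` is `c`-convex: `u x = sup_y (u^c(y) − c(x,y))` where `u^c(y) = inf_z (u z + c z y)`
    (∀ x : X, IsLUB
        {r : ℝ | ∃ (y : Y) (s : ℝ), IsGLB {t : ℝ | ∃ z : X, t = u z + c z y} s ∧
          r = s - c x y}
        (u x)) ∧
    -- `S ⊆ ⋃_x {x} × ∂_c u(x)`
    (∀ q ∈ S, ∀ z : X, u q.1 + c q.1 q.2 - c z q.2 ≤ u z) :=
  ⟨fun x => isLUB_cConvex_of_isLUB_cSubdiff (isLUB_cSubdiff_of_isLUB_chainVals hu x),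
    fun _ hq => mem_cSubdiff_of_isLUB_chainVals hu hq⟩

/-- Any `c`-cyclically monotone set is contained in the `c`-subdifferential of a
`c`-convex function, namely of `u x = sup (chainVals c S x₀ y₀ x)`. -/
theorem stmt8 (c : X → Y → ℝ) (S : Set (X × Y)) (hS : CCyclicallyMonotone c S)
    (x₀ : X) (y₀ : Y) (h₀ : (x₀, y₀) ∈ S)
    (u : X → ℝ) (hu : ∀ x, IsLUB (chainVals c S x₀ y₀ x) (u x)) :
    -- `u` is `c`-convex: `u x = sup_y (u^c(y) − c(x,y))` where `u^c(y) = inf_z (u z + c z y)`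
    (∀ x : X, IsLUB
        {r : ℝ | ∃ (y : Y) (s : ℝ), IsGLB {t : ℝ | ∃ z : X, t = u z + c z y} s ∧
          r = s - c x y}
        (u x)) ∧
    -- `S ⊆ ⋃_x {x} × ∂_c u(x)`
    (∀ q ∈ S, ∀ z : X, u q.1 + c q.1 q.2 - c z q.2 ≤ u z) :=
  stmt8_general c S x₀ y₀ u hu
end

section
/- If c : X × Y → ℝ is of class C² with uniformly bounded second x-derivatives (|D²_{xx} c(x,y)| ≤ C for all x ∈ X, y ∈ Y) and Y is bounded, then every real-valued c-convex function ψ on a convex open set X is semiconvex: ψ(x) + C|x|²/2 is convex on X. -/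
/-!
Each function `ψ^c(y) - c(·, y)` becomes convex after adding `C‖x‖²/2`, since the second
derivative of `C‖x‖²/2 - c(·, y)` is `C⟪v, v⟫ - D²ₓₓc(v, v) ≥ 0`; and `ψ`, being their supremum,
inherits this because a supremum of convex functions is convex.
-/

open Set

/-- A `c`-convex function on `X`: `ψ(x) = sup_{y ∈ Y} [ψ^c(y) − c(x,y)]` where
`ψ^c(y) = inf_{z ∈ X} [ψ(z) + c(z,y)]`. -/
def IsCConvexOn {n : ℕ} (X Y : Set (EuclideanSpace ℝ (Fin n)))
    (c : EuclideanSpace ℝ (Fin n) → EuclideanSpace ℝ (Fin n) → ℝ)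
    (ψ : EuclideanSpace ℝ (Fin n) → ℝ) : Prop :=
  ∀ x ∈ X, IsLUB
    {r : ℝ | ∃ y ∈ Y, ∃ s : ℝ,
      IsGLB {t : ℝ | ∃ z ∈ X, t = ψ z + c z y} s ∧ r = s - c x y}
    (ψ x)

section SecondDerivativeTest

variable {E : Type*} [NormedAddCommGroup E] [NormedSpace ℝ E] {s : Set E} {f : E → ℝ}

theorem convexOn_of_hasFDerivAt2_nonneg (hs : Convex ℝ s) {f' : E → E →L[ℝ] ℝ}
    {f'' : E → E →L[ℝ] E →L[ℝ] ℝ} (hf' : ∀ x ∈ s, HasFDerivAt f (f' x) x)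
    (hf'' : ∀ x ∈ s, HasFDerivAt f' (f'' x) x) (hf''₀ : ∀ x ∈ s, ∀ v, 0 ≤ f'' x v v) :
    ConvexOn ℝ s f := by
  refine ⟨hs, fun x hx z hz a b ha hb hab => ?_⟩
  have hγ : ∀ t ∈ Icc (0 : ℝ) 1, x + t • (z - x) ∈ s := fun t ht => hs.add_smul_sub_mem hx hz ht
  have hγ' (t : ℝ) : HasDerivAt (fun t : ℝ => x + t • (z - x)) (z - x) t := by
    simpa using ((hasDerivAt_id t).smul_const (z - x)).const_add x
  have hφ' : ∀ t ∈ Icc (0 : ℝ) 1,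
      HasDerivAt (fun t => f (x + t • (z - x))) (f' (x + t • (z - x)) (z - x)) t := fun t ht =>
    (hf' _ (hγ t ht)).comp_hasDerivAt t (hγ' t)
  have hφ'' : ∀ t ∈ Icc (0 : ℝ) 1, HasDerivAt (fun t => f' (x + t • (z - x)) (z - x))
      (f'' (x + t • (z - x)) (z - x) (z - x)) t := by
    intro t ht
    have hc : HasDerivAt (fun t => f' (x + t • (z - x))) (f'' (x + t • (z - x)) (z - x)) t :=
      (hf'' _ (hγ t ht)).comp_hasDerivAt t (hγ' t)
    simpa using hc.clm_apply (hasDerivAt_const t (z - x))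
  have hφ : ConvexOn ℝ (Icc (0 : ℝ) 1) (fun t => f (x + t • (z - x))) :=
    convexOn_of_hasDerivWithinAt2_nonneg (convex_Icc 0 1)
      (fun t ht => (hφ' t ht).continuousAt.continuousWithinAt)
      (fun t ht => (hφ' t (interior_subset ht)).hasDerivWithinAt)
      (fun t ht => (hφ'' t (interior_subset ht)).hasDerivWithinAt)
      (fun t ht => hf''₀ _ (hγ t (interior_subset ht)) (z - x))
  have key := hφ.2 (left_mem_Icc.2 zero_le_one) (right_mem_Icc.2 zero_le_one) ha hb hab
  have hcombo : a • x + b • z = x + b • (z - x) := by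
    rw [eq_sub_of_add_eq hab, sub_smul, one_smul, smul_sub]; abel
  simpa [hcombo, smul_eq_mul] using key

theorem fderiv_fderiv_apply_le {C : ℝ} {x : E} (hC : ‖iteratedFDeriv ℝ 2 f x‖ ≤ C) (v : E) :
    fderiv ℝ (fderiv ℝ f) x v v ≤ C * ‖v‖ ^ 2 := by
  have hnorm : ‖fderiv ℝ (fderiv ℝ f) x‖ = ‖iteratedFDeriv ℝ 2 f x‖ := by
    rw [← norm_iteratedFDeriv_fderiv, norm_iteratedFDeriv_one]
  calc fderiv ℝ (fderiv ℝ f) x v v ≤ ‖fderiv ℝ (fderiv ℝ f) x‖ * ‖v‖ * ‖v‖ :=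
        (le_abs_self _).trans ((fderiv ℝ (fderiv ℝ f) x).le_opNorm₂ v v)
    _ ≤ C * ‖v‖ ^ 2 := by rw [hnorm, mul_assoc, ← sq]; gcongr

end SecondDerivativeTest

theorem convexOn_mul_norm_sq_div_two_sub {E : Type*} [NormedAddCommGroup E]
    [InnerProductSpace ℝ E] {s : Set E} {f : E → ℝ} {C : ℝ} (hs : Convex ℝ s) (ho : IsOpen s)
    (hf : ContDiffOn ℝ 2 f s) (hC : ∀ x ∈ s, ‖iteratedFDerivWithin ℝ 2 f s x‖ ≤ C) :
    ConvexOn ℝ s (fun x => C * ‖x‖ ^ 2 / 2 - f x) := by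
  have hq (x : E) : HasFDerivAt (fun x => C * ‖x‖ ^ 2 / 2) ((C • innerSL ℝ) x) x := by
    have hfun : (fun x : E => C * ‖x‖ ^ 2 / 2) = fun x => C / 2 * ‖x‖ ^ 2 := by ext; ring
    rw [hfun]
    refine ((hasStrictFDerivAt_norm_sq x).hasFDerivAt.const_mul (C / 2)).congr_fderiv ?_
    ext v
    simp only [smul_apply, innerSL_apply_apply ℝ, smul_eq_mul]
    ring
  have hf2 : ∀ x ∈ s, ContDiffAt ℝ 2 f x := fun x hx => hf.contDiffAt (ho.mem_nhds hx)
  refine convexOn_of_hasFDerivAt2_nonneg hs (fun x hx => (hq x).sub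
    ((hf2 x hx).differentiableAt two_ne_zero).hasFDerivAt) (fun x hx =>
    (C • innerSL ℝ).hasFDerivAt.sub
      (((hf2 x hx).fderiv_right (by norm_num)).differentiableAt one_ne_zero).hasFDerivAt) ?_
  intro x hx v
  have hD2 : fderiv ℝ (fderiv ℝ f) x v v ≤ C * ‖v‖ ^ 2 := by
    refine fderiv_fderiv_apply_le ?_ v
    rw [← iteratedFDerivWithin_of_isOpen 2 ho hx]
    exact hC x hx
  simpa only [sub_apply, smul_apply, innerSL_apply_apply ℝ, real_inner_self_eq_norm_sq,
    smul_eq_mul, sub_nonneg] using hD2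

theorem convexOn_add_of_isLUB_image {E ι : Type*} [AddCommGroup E] [Module ℝ E] {s : Set E}
    {I : Set ι} {g : ι → E → ℝ} {f h : E → ℝ} (hs : Convex ℝ s)
    (hg : ∀ i ∈ I, ConvexOn ℝ s (fun x => g i x + h x))
    (hf : ∀ x ∈ s, IsLUB ((g · x) '' I) (f x)) : ConvexOn ℝ s (fun x => f x + h x) := by
  refine ⟨hs, fun x hx z hz a b ha hb hab => ?_⟩
  have hle : f (a • x + b • z) ≤ a * (f x + h x) + b * (f z + h z) - h (a • x + b • z) := by
    refine (hf _ (hs hx hz ha hb hab)).2 ?_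
    rintro _ ⟨i, hi, rfl⟩
    have hgi := (hg i hi).2 hx hz ha hb hab
    have hgx := (hf x hx).1 (mem_image_of_mem _ hi)
    have hgz := (hf z hz).1 (mem_image_of_mem _ hi)
    simp only [smul_eq_mul] at hgi ⊢
    linarith [mul_le_mul_of_nonneg_left hgx ha, mul_le_mul_of_nonneg_left hgz hb]
  simp only [smul_eq_mul]
  linarith

theorem stmt11_general {n : ℕ} (X Y : Set (EuclideanSpace ℝ (Fin n)))
    (hXc : Convex ℝ X) (hXo : IsOpen X)
    (c : EuclideanSpace ℝ (Fin n) → EuclideanSpace ℝ (Fin n) → ℝ)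
    (C : ℝ)
    (hc : ∀ y ∈ Y, ContDiffOn ℝ 2 (fun x => c x y) X)
    (hbound : ∀ y ∈ Y, ∀ x ∈ X, ‖iteratedFDerivWithin ℝ 2 (fun x' => c x' y) X x‖ ≤ C)
    (ψ : EuclideanSpace ℝ (Fin n) → ℝ)
    (hψ : IsCConvexOn X Y c ψ) :
    ConvexOn ℝ X (fun x => ψ x + C * ‖x‖ ^ 2 / 2) := by
  set I := {p : EuclideanSpace ℝ (Fin n) × ℝ |
    p.1 ∈ Y ∧ IsGLB {t : ℝ | ∃ z ∈ X, t = ψ z + c z p.1} p.2}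
  refine convexOn_add_of_isLUB_image (I := I) (g := fun p x => p.2 - c x p.1) hXc ?_ ?_
  · rintro ⟨y, s⟩ ⟨hy, -⟩
    refine ((convexOn_mul_norm_sq_div_two_sub hXc hXo (hc y hy) (hbound y hy)).add_const s).congr
      fun x _ => ?_
    simp only [Pi.add_apply]
    ring
  · intro x hx
    convert hψ x hx using 1
    ext r
    simp [I, and_assoc, eq_comm]

/-- `c`-convex functions are semiconvex when `c` is `C²` with bounded second
`x`-derivatives and `Y` is bounded. -/
theorem stmt11 {n : ℕ} (X Y : Set (EuclideanSpace ℝ (Fin n)))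
    (hXc : Convex ℝ X) (hXo : IsOpen X) (hY : Bornology.IsBounded Y)
    (c : EuclideanSpace ℝ (Fin n) → EuclideanSpace ℝ (Fin n) → ℝ)
    (C : ℝ)
    (hc : ∀ y ∈ Y, ContDiffOn ℝ 2 (fun x => c x y) X)
    (hbound : ∀ y ∈ Y, ∀ x ∈ X, ‖iteratedFDerivWithin ℝ 2 (fun x' => c x' y) X x‖ ≤ C)
    (ψ : EuclideanSpace ℝ (Fin n) → ℝ)
    (hψ : IsCConvexOn X Y c ψ) :
    ConvexOn ℝ X (fun x => ψ x + C * ‖x‖ ^ 2 / 2) :=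
  stmt11_general X Y hXc hXo c C hc hbound ψ hψ
end

section
/- Let u : ℝⁿ → ℝ be convex and suppose the gradient map pushes f dx forward to g dy with f supported in X and g supported in Y, g > 0 on Y. If for a Borel set A ⊆ X one has ∂u(A) ⊆ Y up to a Lebesgue-null set, then the Monge-Ampère measure satisfies μ_u(A) = ∫_A f(x)/g(∇u(x)) dx. -/
/-!
Off a Lebesgue-null set of `x`, `u` is differentiable at `x` and `∇u(x)` belongs to no other
subdifferential (those `y` lying in two subdifferentials form a null set, and `(∇u)_♯(f dx)` is
absolutely continuous). Hence `(∇u)⁻¹(∂u(E)) = E` almost everywhere for `f dx`, and the change of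
variables `y = ∇u(x)` gives `|∂u(E) ∩ Y| = ∫_E f / g(∇u)` whenever `∂u(E)` is measurable, which is
the case for `E` open or compact. Both sides are monotone in `E` and the right one is a regular
measure, so approximating `A` by open sets from outside and compact sets from inside proves the
identity for `A`; the hypothesis on `∂u(A) \ Y` removes the intersection with `Y`.
-/

open Set MeasureTheory

open Filter Topology
open scoped ENNReal RealInnerProductSpace

section Rademacher

variable {E F : Type*} [NormedAddCommGroup E] [NormedSpace ℝ E] [FiniteDimensional ℝ E]
  [MeasurableSpace E] [BorelSpace E] {μ : Measure E} [μ.IsAddHaarMeasure]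
  [NormedAddCommGroup F] [NormedSpace ℝ F] [FiniteDimensional ℝ F]

theorem LocallyLipschitzOn.ae_differentiableAt_of_mem {f : E → F} {s : Set E} (hs : IsOpen s)
    (hf : LocallyLipschitzOn s f) : ∀ᵐ x ∂μ, x ∈ s → DifferentiableAt ℝ f x := by
  rw [ae_iff]
  refine measure_null_of_locally_null _ fun x hx => ?_
  have hxs := (Classical.not_imp.1 hx).1
  obtain ⟨K, t, ht, hlip⟩ := hf hxs
  rw [hs.nhdsWithin_eq hxs] at ht
  refine ⟨_, inter_mem_nhdsWithin _ (interior_mem_nhds.2 ht), ?_⟩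
  have hrademacher := ae_iff.1 (hlip.ae_differentiableWithinAt_of_mem (μ := μ))
  refine measure_mono_null (fun z ⟨hz, hzt⟩ => ?_) hrademacher
  exact fun hd => (Classical.not_imp.1 hz).2 <|
    (hd (interior_subset hzt)).differentiableAt (mem_interior_iff_mem_nhds.1 hzt)

theorem ConvexOn.ae_differentiableAt {u : E → ℝ} (hu : ConvexOn ℝ univ u) :
    ∀ᵐ x ∂μ, DifferentiableAt ℝ u x := by
  simpa using (hu.locallyLipschitzOn isOpen_univ).ae_differentiableAt_of_mem (μ := μ) isOpen_univ

end Rademacher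

section Gradient

variable {E : Type*} [NormedAddCommGroup E] [NormedSpace ℝ E]

theorem ConvexOn.add_apply_sub_le_of_hasFDerivAt {u : E → ℝ} {s : Set E} {u' : E →L[ℝ] ℝ}
    {x y : E} (hu : ConvexOn ℝ s u) (hx : x ∈ s) (hy : y ∈ s) (hd : HasFDerivAt u u' x) :
    u x + u' (y - x) ≤ u y := by
  have hline := hu.comp_affineMap (AffineMap.lineMap (k := ℝ) x y)
  have hderiv : HasDerivAt (u ∘ AffineMap.lineMap (k := ℝ) x y) (u' (y - x)) 0 := by
    refine hd.comp_hasDerivAt_of_eq (0 : ℝ) AffineMap.hasDerivAt_lineMap ?_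
    simp
  have := hline.le_slope_of_hasDerivAt (by simpa using hx) (by simpa using hy) zero_lt_one hderiv
  simp only [slope_def_field, Function.comp_apply, AffineMap.lineMap_apply_zero,
    AffineMap.lineMap_apply_one, sub_zero, div_one] at this
  linarith

theorem HasFDerivAt.eq_of_eventually_add_apply_sub_le {v : E → ℝ} {v' ℓ : E →L[ℝ] ℝ} {y : E}
    (hv : HasFDerivAt v v' y) (hℓ : ∀ᶠ z in 𝓝 y, v y + ℓ (z - y) ≤ v z) : ℓ = v' := by
  have hmin : IsLocalMin (fun z => v z - ℓ (z - y)) y :=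
    hℓ.mono fun z hz => by simp only [sub_self, map_zero, sub_zero]; linarith
  have hd : HasFDerivAt (fun z => v z - ℓ (z - y)) (v' - ℓ) y :=
    hv.sub (ℓ.hasFDerivAt.comp y ((hasFDerivAt_id y).sub_const y))
  exact (sub_eq_zero.1 (hmin.hasFDerivAt_eq_zero hd)).symm

end Gradient

section Legendre

variable {E : Type*} [NormedAddCommGroup E] [InnerProductSpace ℝ E]

def legendreDom (u : E → ℝ) : Set E := {y | BddAbove (range fun x => ⟪x, y⟫ - u x)}

/-- The Legendre transform `u*`; off `legendreDom u` the supremum is the junk value `0`. -/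
noncomputable def legendre (u : E → ℝ) (y : E) : ℝ := ⨆ x, ⟪x, y⟫ - u x

theorem convexOn_legendre (u : E → ℝ) : ConvexOn ℝ (legendreDom u) (legendre u) := by
  have key : ∀ ⦃y₁⦄, y₁ ∈ legendreDom u → ∀ ⦃y₂⦄, y₂ ∈ legendreDom u → ∀ ⦃a b : ℝ⦄,
      0 ≤ a → 0 ≤ b → a + b = 1 →
      ∀ x, ⟪x, a • y₁ + b • y₂⟫ - u x ≤ a * legendre u y₁ + b * legendre u y₂ := by
    intro y₁ hy₁ y₂ hy₂ a b ha hb hab x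
    have h₁ : a * (⟪x, y₁⟫ - u x) ≤ a * legendre u y₁ :=
      mul_le_mul_of_nonneg_left (le_ciSup hy₁ x) ha
    have h₂ : b * (⟪x, y₂⟫ - u x) ≤ b * legendre u y₂ :=
      mul_le_mul_of_nonneg_left (le_ciSup hy₂ x) hb
    rw [inner_add_right, real_inner_smul_right, real_inner_smul_right]
    linear_combination h₁ + h₂ + u x * hab
  refine ⟨fun y₁ hy₁ y₂ hy₂ a b ha hb hab => ?_, fun y₁ hy₁ y₂ hy₂ a b ha hb hab => ?_⟩
  · exact ⟨_, forall_mem_range.2 (key hy₁ hy₂ ha hb hab)⟩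
  · exact ciSup_le (key hy₁ hy₂ ha hb hab)

end Legendre

section Subdifferential

variable {n : ℕ} {u : EuclideanSpace ℝ (Fin n) → ℝ} {x y z : EuclideanSpace ℝ (Fin n)}

theorem ConvexOn.gradient_mem_subdiff (hu : ConvexOn ℝ univ u) (hd : DifferentiableAt ℝ u x) :
    gradient u x ∈ subdiff u x := fun y => by
  simpa using hu.add_apply_sub_le_of_hasFDerivAt (mem_univ x) (mem_univ y)
    (hasGradientAt_iff_hasFDerivAt.1 hd.hasGradientAt)

theorem isGreatest_of_mem_subdiff (hy : y ∈ subdiff u x) :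
    IsGreatest (range fun z => ⟪z, y⟫ - u z) (⟪x, y⟫ - u x) := by
  refine ⟨⟨x, rfl⟩, forall_mem_range.2 fun z => ?_⟩
  have := hy z
  rw [inner_sub_right, real_inner_comm z, real_inner_comm x] at this
  linarith

theorem mem_legendreDom_of_mem_subdiff (hy : y ∈ subdiff u x) : y ∈ legendreDom u :=
  (isGreatest_of_mem_subdiff hy).bddAbove

theorem legendre_eq_of_mem_subdiff (hy : y ∈ subdiff u x) : legendre u y = ⟪x, y⟫ - u x :=
  (isGreatest_of_mem_subdiff hy).csSup_eq

theorem legendre_add_inner_le (hy : y ∈ subdiff u x) (hz : z ∈ legendreDom u) :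
    legendre u y + ⟪x, z - y⟫ ≤ legendre u z := by
  have : ⟪x, z⟫ - u x ≤ legendre u z := le_ciSup hz x
  rw [legendre_eq_of_mem_subdiff hy, inner_sub_right]
  linarith

/-- Two points sharing a subgradient `y` are both subgradients of `u*` at `y`, so `u*` is not
differentiable there; a convex function is differentiable a.e. in the interior of its domain,
and the boundary of a convex set is null. -/
theorem ae_subsingleton_setOf_mem_subdiff (u : EuclideanSpace ℝ (Fin n) → ℝ) :
    ∀ᵐ y, {x | y ∈ subdiff u x}.Subsingleton := by
  have hfrontier : ∀ᵐ y, y ∉ frontier (legendreDom u) :=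
    measure_eq_zero_iff_ae_notMem.1 ((convexOn_legendre u).1.addHaar_frontier volume)
  have hdiff : ∀ᵐ y, y ∈ interior (legendreDom u) → DifferentiableAt ℝ (legendre u) y :=
    (convexOn_legendre u).locallyLipschitzOn_interior.ae_differentiableAt_of_mem isOpen_interior
  filter_upwards [hfrontier, hdiff] with y hyf hyd x₁ hx₁ x₂ hx₂
  have hy : y ∈ interior (legendreDom u) := by
    by_contra h
    exact hyf ⟨subset_closure (mem_legendreDom_of_mem_subdiff hx₁), h⟩
  have hnhds := mem_interior_iff_mem_nhds.1 hy
  have hderiv := (hyd hy).hasFDerivAt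
  have toDual_eq : ∀ {x}, y ∈ subdiff u x →
      InnerProductSpace.toDual ℝ _ x = fderiv ℝ (legendre u) y := fun hx =>
    hderiv.eq_of_eventually_add_apply_sub_le
      (Filter.mem_of_superset hnhds fun z hz => by simpa using legendre_add_inner_le hx hz)
  exact (InnerProductSpace.toDual ℝ _).injective ((toDual_eq hx₁).trans (toDual_eq hx₂).symm)

theorem ConvexOn.gradient_preimage_subimg_ae_eq (hu : ConvexOn ℝ univ u)
    {ν : Measure (EuclideanSpace ℝ (Fin n))} (hν : ν ≪ volume)
    (hT : AEMeasurable (fun x => gradient u x) ν)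
    (hmap : ν.map (fun x => gradient u x) ≪ volume) (E : Set (EuclideanSpace ℝ (Fin n))) :
    (fun x => gradient u x) ⁻¹' subimg u E =ᵐ[ν] E := by
  have hdiff : ∀ᵐ x ∂ν, DifferentiableAt ℝ u x := hν.ae_le hu.ae_differentiableAt
  have hinj : ∀ᵐ x ∂ν, {x' | gradient u x ∈ subdiff u x'}.Subsingleton :=
    ae_of_ae_map hT (hmap.ae_le (ae_subsingleton_setOf_mem_subdiff u))
  filter_upwards [hdiff, hinj] with x hxd hxinj
  have hx := hu.gradient_mem_subdiff hxd
  refine propext ⟨fun h => ?_, fun h => mem_biUnion h hx⟩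
  obtain ⟨x', hx'E, hx'⟩ := mem_iUnion₂.1 h
  exact hxinj hx' hx ▸ hx'E

end Subdifferential

section Subimage

variable {n : ℕ} {u : EuclideanSpace ℝ (Fin n) → ℝ}

theorem subimg_mono (u : EuclideanSpace ℝ (Fin n) → ℝ) : Monotone (subimg u) :=
  fun _ _ h => biUnion_subset_biUnion_left h

theorem subimg_iUnion {ι : Type*} (u : EuclideanSpace ℝ (Fin n) → ℝ)
    (s : ι → Set (EuclideanSpace ℝ (Fin n))) : subimg u (⋃ i, s i) = ⋃ i, subimg u (s i) :=
  biUnion_iUnion _ _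

theorem IsCompact.isClosed_subimg (hu : Continuous u) {K : Set (EuclideanSpace ℝ (Fin n))}
    (hK : IsCompact K) : IsClosed (subimg u K) := by
  refine IsSeqClosed.isClosed fun ys y hys hy => ?_
  choose xs hxsK hxs using fun m => mem_iUnion₂.1 (hys m)
  obtain ⟨x, hxK, φ, hφ, hx⟩ := hK.tendsto_subseq hxsK
  refine mem_biUnion hxK fun z => ?_
  have hlim : Tendsto (fun m => u (xs (φ m)) + ⟪ys (φ m), z - xs (φ m)⟫) atTop
      (𝓝 (u x + ⟪y, z - x⟫)) :=
    ((hu.tendsto x).comp hx).add ((hy.comp hφ.tendsto_atTop).inner (tendsto_const_nhds.sub hx))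
  exact le_of_tendsto hlim (.of_forall fun m => hxs (φ m) z)

theorem IsSigmaCompact.measurableSet_subimg (hu : Continuous u)
    {E : Set (EuclideanSpace ℝ (Fin n))} (hE : IsSigmaCompact E) :
    MeasurableSet (subimg u E) := by
  obtain ⟨K, hK, rfl⟩ := hE
  rw [subimg_iUnion]
  exact .iUnion fun m => ((hK m).isClosed_subimg hu).measurableSet

end Subimage

theorem IsOpen.isSigmaCompact {α : Type*} [PseudoMetricSpace α] [SigmaCompactSpace α]
    {U : Set α} (hU : IsOpen U) : IsSigmaCompact U := by
  obtain ⟨F, hF, -, rfl, -⟩ := hU.exists_iUnion_isClosed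
  exact isSigmaCompact_iUnion _ fun m =>
    isSigmaCompact_univ.of_isClosed_subset (hF m) (subset_univ _)

theorem Monotone.eq_measure_of_regular {α : Type*} [TopologicalSpace α] [MeasurableSpace α]
    {μ : Measure α} [μ.OuterRegular] [μ.InnerRegular] {F : Set α → ℝ≥0∞} (hF : Monotone F)
    (hopen : ∀ U, IsOpen U → F U ≤ μ U) (hcompact : ∀ K, IsCompact K → μ K ≤ F K)
    {A : Set α} (hA : MeasurableSet A) : F A = μ A := by
  refine le_antisymm ?_ ?_
  · rw [A.measure_eq_iInf_isOpen μ]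
    exact le_iInf₂ fun U hAU => le_iInf fun hU => (hF hAU).trans (hopen U hU)
  · rw [hA.measure_eq_iSup_isCompact μ]
    exact iSup₂_le fun K hKA => iSup_le fun hK => (hcompact K hK).trans (hF hKA)

theorem isLocallyFiniteMeasure_withDensity_ofReal_of_le {α : Type*} [TopologicalSpace α]
    [MeasurableSpace α] {μ : Measure α} [IsLocallyFiniteMeasure μ] {h : α → ℝ} {C : ℝ}
    (hC : ∀ x, h x ≤ C) : IsLocallyFiniteMeasure (μ.withDensity fun x => ENNReal.ofReal (h x)) :=
  Measure.isLocallyFiniteMeasure_of_le (μ := C.toNNReal • μ) <| by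
    rw [ENNReal.smul_def, ← withDensity_const]
    exact withDensity_mono (.of_forall fun x => ENNReal.ofReal_le_ofReal (hC x))

theorem setLIntegral_inv_withDensity {α : Type*} [MeasurableSpace α] {μ : Measure α}
    {g : α → ℝ} {Y S : Set α} (hY : MeasurableSet Y) (hS : MeasurableSet S) (hg : Measurable g)
    (hgY : ∀ y ∈ Y, 0 < g y) (hg0 : ∀ y ∉ Y, g y = 0) :
    ∫⁻ y in S, ENNReal.ofReal (1 / g y) ∂μ.withDensity (fun y => ENNReal.ofReal (g y)) =
      μ (S ∩ Y) := by
  have hinv : Measurable fun y => ENNReal.ofReal (1 / g y) :=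
    (measurable_const.div hg).ennreal_ofReal
  rw [setLIntegral_withDensity_eq_setLIntegral_mul _ hg.ennreal_ofReal hinv hS]
  have hprod : ((fun y => ENNReal.ofReal (g y)) * fun y => ENNReal.ofReal (1 / g y)) =
      Y.indicator 1 := by
    ext y
    by_cases hy : y ∈ Y
    · rw [Pi.mul_apply, ← ENNReal.ofReal_mul (hgY y hy).le, mul_one_div_cancel (hgY y hy).ne',
        ENNReal.ofReal_one, indicator_of_mem hy, Pi.one_apply]
    · simp [hg0 y hy, hy]
  rw [hprod, lintegral_indicator_one hY, Measure.restrict_apply hY, inter_comm]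

theorem ConvexOn.volume_subimg_inter_eq_setLIntegral {n : ℕ} {u : EuclideanSpace ℝ (Fin n) → ℝ}
    (hu : ConvexOn ℝ univ u) (hum : Measurable fun x => gradient u x)
    {f g : EuclideanSpace ℝ (Fin n) → ℝ} (hf : Measurable f) (hf0 : ∀ x, 0 ≤ f x)
    (hg : Measurable g) {Y : Set (EuclideanSpace ℝ (Fin n))} (hY : MeasurableSet Y)
    (hgY : ∀ y ∈ Y, 0 < g y) (hg0 : ∀ y ∉ Y, g y = 0)
    (hpush : Measure.map (fun x => gradient u x)
        (volume.withDensity fun x => ENNReal.ofReal (f x)) =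
      volume.withDensity fun y => ENNReal.ofReal (g y))
    {E : Set (EuclideanSpace ℝ (Fin n))} (hE : MeasurableSet E)
    (hSE : MeasurableSet (subimg u E)) :
    volume (subimg u E ∩ Y) = ∫⁻ x in E, ENNReal.ofReal (f x / g (gradient u x)) := by
  have hinv : Measurable fun y => ENNReal.ofReal (1 / g y) :=
    (measurable_const.div hg).ennreal_ofReal
  have hae := hu.gradient_preimage_subimg_ae_eq (withDensity_absolutelyContinuous _ _)
    hum.aemeasurable (hpush ▸ withDensity_absolutelyContinuous _ _) E
  calc volume (subimg u E ∩ Y)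
      = ∫⁻ y in subimg u E, ENNReal.ofReal (1 / g y)
          ∂volume.withDensity fun y => ENNReal.ofReal (g y) :=
        (setLIntegral_inv_withDensity hY hSE hg hgY hg0).symm
    _ = ∫⁻ x in (fun x => gradient u x) ⁻¹' subimg u E, ENNReal.ofReal (1 / g (gradient u x))
          ∂volume.withDensity fun x => ENNReal.ofReal (f x) := by
        rw [← hpush, setLIntegral_map hSE hinv hum]
    _ = ∫⁻ x in E, ENNReal.ofReal (1 / g (gradient u x))
          ∂volume.withDensity fun x => ENNReal.ofReal (f x) := setLIntegral_congr hae
    _ = ∫⁻ x in E, ENNReal.ofReal (f x / g (gradient u x)) := by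
        rw [setLIntegral_withDensity_eq_setLIntegral_mul _ hf.ennreal_ofReal
          (g := fun x => ENNReal.ofReal (1 / g (gradient u x))) (hinv.comp hum) hE]
        refine setLIntegral_congr_fun hE fun x _ => ?_
        rw [Pi.mul_apply, ← ENNReal.ofReal_mul (hf0 x), mul_one_div]

theorem stmt18_general {n : ℕ} (X Y : Set (EuclideanSpace ℝ (Fin n)))
    (hYo : IsOpen Y)
    (f g : EuclideanSpace ℝ (Fin n) → ℝ) (lam : ℝ) (hlam : 0 < lam)
    (hf0 : ∀ x ∉ X, f x = 0) (hg0 : ∀ y ∉ Y, g y = 0)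
    (hfb : ∀ x ∈ X, lam ≤ f x ∧ f x ≤ 1 / lam)
    (hgb : ∀ y ∈ Y, lam ≤ g y ∧ g y ≤ 1 / lam)
    (hfm : Measurable f) (hgm : Measurable g)
    (u : EuclideanSpace ℝ (Fin n) → ℝ) (hu : ConvexOn ℝ Set.univ u)
    (hum : Measurable fun x => gradient u x)
    -- `(∇u)_♯ (f dx) = g dy`
    (hpush : Measure.map (fun x => gradient u x)
        (volume.withDensity fun x => ENNReal.ofReal (f x)) =
      volume.withDensity fun y => ENNReal.ofReal (g y))
    (A : Set (EuclideanSpace ℝ (Fin n))) (hA : MeasurableSet A)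
    -- `∂u(A) ⊆ Y` up to a Lebesgue-null set
    (hAY : volume (subimg u A \ Y) = 0) :
    volume (subimg u A) = ∫⁻ x in A, ENNReal.ofReal (f x / g (gradient u x)) := by
  have hf_nonneg : ∀ x, 0 ≤ f x := fun x => by
    by_cases hx : x ∈ X
    exacts [hlam.le.trans (hfb x hx).1, (hf0 x hx).ge]
  have hdensity_le : ∀ x, f x / g (gradient u x) ≤ 1 / lam / lam := fun x => by
    by_cases hy : gradient u x ∈ Y
    · have hfx : f x ≤ 1 / lam := by
        by_cases hx : x ∈ X
        exacts [(hfb x hx).2, by rw [hf0 x hx]; positivity]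
      exact div_le_div₀ (by positivity) hfx hlam (hgb _ hy).1
    · rw [hg0 _ hy, div_zero]
      positivity
  set ρ := volume.withDensity fun x => ENNReal.ofReal (f x / g (gradient u x))
  have : IsLocallyFiniteMeasure ρ := isLocallyFiniteMeasure_withDensity_ofReal_of_le hdensity_le
  have hsubimg : ∀ E, MeasurableSet E → IsSigmaCompact E → volume (subimg u E ∩ Y) = ρ E :=
    fun E hE hσ => by
      rw [withDensity_apply _ hE]
      exact hu.volume_subimg_inter_eq_setLIntegral hum hfm hf_nonneg hgm hYo.measurableSet
        (fun y hy => hlam.trans_le (hgb y hy).1) hg0 hpush hE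
        (hσ.measurableSet_subimg hu.locallyLipschitz.continuous)
  have hmono : Monotone fun s => volume (subimg u s ∩ Y) :=
    fun s t h => measure_mono (inter_subset_inter_left _ (subimg_mono u h))
  calc volume (subimg u A) = volume (subimg u A ∩ Y) := by
        rw [← measure_inter_add_sdiff _ hYo.measurableSet, hAY, add_zero]
    _ = ρ A := hmono.eq_measure_of_regular
        (fun U hU => (hsubimg U hU.measurableSet hU.isSigmaCompact).le)
        (fun K hK => (hsubimg K hK.measurableSet hK.isSigmaCompact).ge) hA
    _ = _ := withDensity_apply _ hA

/-- If `∂u(A) ⊆ Y` up to a null set, then the Monge-Ampère measure of `u` on `A`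
equals `∫_A f / (g ∘ ∇u)`. -/
theorem stmt18 {n : ℕ} (X Y : Set (EuclideanSpace ℝ (Fin n)))
    (hXo : IsOpen X) (hXb : Bornology.IsBounded X)
    (hYo : IsOpen Y) (hYb : Bornology.IsBounded Y)
    (f g : EuclideanSpace ℝ (Fin n) → ℝ) (lam : ℝ) (hlam : 0 < lam)
    (hf0 : ∀ x ∉ X, f x = 0) (hg0 : ∀ y ∉ Y, g y = 0)
    (hfb : ∀ x ∈ X, lam ≤ f x ∧ f x ≤ 1 / lam)
    (hgb : ∀ y ∈ Y, lam ≤ g y ∧ g y ≤ 1 / lam)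
    (hfm : Measurable f) (hgm : Measurable g)
    (u : EuclideanSpace ℝ (Fin n) → ℝ) (hu : ConvexOn ℝ Set.univ u)
    (hum : Measurable fun x => gradient u x)
    -- `(∇u)_♯ (f dx) = g dy`
    (hpush : Measure.map (fun x => gradient u x)
        (volume.withDensity fun x => ENNReal.ofReal (f x)) =
      volume.withDensity fun y => ENNReal.ofReal (g y))
    (A : Set (EuclideanSpace ℝ (Fin n))) (hA : MeasurableSet A) (hAX : A ⊆ X)
    -- `∂u(A) ⊆ Y` up to a Lebesgue-null set
    (hAY : volume (subimg u A \ Y) = 0) :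
    volume (subimg u A) = ∫⁻ x in A, ENNReal.ofReal (f x / g (gradient u x)) :=
  stmt18_general X Y hYo f g lam hlam hf0 hg0 hfb hgb hfm hgm u hu hum hpush A hA hAY
end
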